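/- For any set function f : 2^V → ℝ≥0, any point (p_1,…,p_K) ∈ ∏_{k=1}^K Δ_{n_k}, any k ∈ {1,…,K} and any m_1, m_2 ∈ {1,…,n_k}: if B_k = 1 then ∂²F/∂p_k^{m_1}∂p_k^{m_2} (p_1,…,p_K) = 0; and if B_k ≥ 2 then ∂²F/∂p_k^{m_1}∂p_k^{m_2} (p_1,…,p_K) = (B_k² − B_k) · E[ f(v_k^{m_1} | S ∪ {v_k^{m_2}}) − f(v_k^{m_1} | S) ], where S = ∪_{(k̂,b̂) ∉ {(k,1),(k,2)}} {e_{k̂}^{b̂}}, the union ranges over all pairs (k̂,b̂) with k̂ ∈ {1,…,K}, b̂ ∈ {1,…,B_{k̂}} except (k,1) and (k,2), and the random elements e_{k̂}^{b̂} are mutually independent with e_{k̂}^{b̂} ∼ Multi(p_{k̂}). -/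

import Mathlib

open Finset

noncomputable section

namespace Multinoulli

variable {K : ℕ}

/-- An element of the ground set `V`: a community index `k` together with the
index `m` of the element `v_k^m` inside its community `V_k`. -/
abbrev Elem (n : Fin K → ℕ) := Σ k : Fin K, Fin (n k)

/-- A sampling slot: a community `k` together with a trial index `b ∈ {1,…,B_k}`. -/
abbrev Slot (B : Fin K → ℕ) := Σ k : Fin K, Fin (B k)

/-- A joint outcome of all the independent multinoulli trials; `none` encodes a
draw of `∅`, which contributes no element. -/
abbrev Choice (n B : Fin K → ℕ) := ∀ s : Slot B, Option (Fin (n s.1))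

/-- The probability that `Multi(p_k)` (the `k`-th block of `x`) assigns to a given
outcome: `x ⟨k,m⟩` for the element `v_k^m` and `1 - Σ_m x ⟨k,m⟩` for `∅`. -/
def prob (n : Fin K → ℕ) (x : Elem n → ℝ) (k : Fin K) : Option (Fin (n k)) → ℝ
  | some m => x ⟨k, m⟩
  | none => 1 - ∑ m : Fin (n k), x ⟨k, m⟩

/-- The probability of the joint outcome `e` (all trials are mutually independent). -/
def jointProb (n B : Fin K → ℕ) (x : Elem n → ℝ) (e : Choice n B) : ℝ :=
  ∏ s : Slot B, prob n x s.1 (e s)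

/-- The subset of the ground set selected by the trials whose slot lies in `A`
(a draw of `∅` contributes no element to the union). -/
def chosen (n B : Fin K → ℕ) (e : Choice n B) (A : Finset (Slot B)) : Finset (Elem n) :=
  A.biUnion fun s => ((e s).map fun m => (⟨s.1, m⟩ : Elem n)).toFinset

/-- The Multinoulli Extension `F` of the set function `f`:
`F(x) = E[f(∪_{k,b} {e_k^b})]` for mutually independent `e_k^b ∼ Multi(p_k)`. -/
def ME (n B : Fin K → ℕ) (f : Finset (Elem n) → ℝ) (x : Elem n → ℝ) : ℝ :=
  ∑ e : Choice n B, f (chosen n B e Finset.univ) * jointProb n B x e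

/-- The first-order partial derivative `∂G/∂x_i` at `x`. -/
def pderiv (n : Fin K → ℕ) (G : (Elem n → ℝ) → ℝ) (i : Elem n) (x : Elem n → ℝ) : ℝ :=
  deriv (fun t => G (Function.update x i t)) (x i)

/-- The gradient `∇G(x)`. -/
def grad (n : Fin K → ℕ) (G : (Elem n → ℝ) → ℝ) (x : Elem n → ℝ) : Elem n → ℝ :=
  fun i => pderiv n G i x

/-- The second-order partial derivative `∂²G/∂x_i∂x_j` at `x`. -/
def pderiv2 (n : Fin K → ℕ) (G : (Elem n → ℝ) → ℝ) (i j : Elem n) (x : Elem n → ℝ) : ℝ :=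
  pderiv n (fun y => pderiv n G j y) i x

/-- The Euclidean inner product on `∏_k ℝ^{n_k}`. -/
def inner' (n : Fin K → ℕ) (u v : Elem n → ℝ) : ℝ := ∑ i : Elem n, u i * v i

/-- Membership in the product of simplices `∏_{k=1}^K Δ_{n_k}`. -/
def InSimplex (n : Fin K → ℕ) (x : Elem n → ℝ) : Prop :=
  (∀ i, 0 ≤ x i) ∧ ∀ k : Fin K, ∑ m : Fin (n k), x ⟨k, m⟩ ≤ 1

/-- Feasibility for the partition constraint: `|S ∩ V_k| ≤ B_k` for all `k`. -/
def Feasible (n B : Fin K → ℕ) (S : Finset (Elem n)) : Prop :=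
  ∀ k : Fin K, (S.filter fun i => i.1 = k).card ≤ B k

/-- Monotonicity of a set function. -/
def MonotoneSet (n : Fin K → ℕ) (f : Finset (Elem n) → ℝ) : Prop :=
  ∀ A B : Finset (Elem n), A ⊆ B → f A ≤ f B

/-- The marginal contribution `f(v|A) = f(A ∪ {v}) - f(A)`. -/
def marg (n : Fin K → ℕ) (f : Finset (Elem n) → ℝ) (v : Elem n) (A : Finset (Elem n)) : ℝ :=
  f (insert v A) - f A

/-- `α`-weak DR-submodularity: `f(v|A) ≥ α·f(v|B)` for all `A ⊆ B` and `v ∉ B`. -/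
def WeaklyDR (n : Fin K → ℕ) (f : Finset (Elem n) → ℝ) (α : ℝ) : Prop :=
  ∀ A B : Finset (Elem n), A ⊆ B → ∀ v, v ∉ B → α * marg n f v B ≤ marg n f v A

/-- `γ`-weak submodularity from below. -/
def WeaklyBelow (n : Fin K → ℕ) (f : Finset (Elem n) → ℝ) (γ : ℝ) : Prop :=
  ∀ A B : Finset (Elem n), A ⊆ B → γ * (f B - f A) ≤ ∑ v ∈ B \ A, marg n f v A

/-- `β`-weak submodularity from above. -/
def WeaklyAbove (n : Fin K → ℕ) (f : Finset (Elem n) → ℝ) (β : ℝ) : Prop :=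
  ∀ A B : Finset (Elem n), A ⊆ B → ∑ v ∈ B \ A, marg n f v (B.erase v) ≤ β * (f B - f A)

/-- The scaled indicator vector `Σ_{k=1}^K (1/B_k)·1_{S∩V_k}`. -/
def indVec (n B : Fin K → ℕ) (S : Finset (Elem n)) : Elem n → ℝ :=
  fun i => if i ∈ S then ((B i.1 : ℝ))⁻¹ else 0

/-!
The Multinoulli Extension is affine in each of the distributions of the individual trials.
Differentiating `E[g]` in `p_k^m` therefore gives `∑_b E[g(e_k^b := v_k^m) - g(e_k^b := ∅)]`:
the derivative of `Multi(p_k)` puts `+1` on `v_k^m` and `-1` on `∅`, and the trial `e_k^b`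
that was differentiated away can be resampled at no cost since `Multi(p_k)` has total mass one.
Differentiating twice, the terms in which both derivatives hit the same trial cancel, because
the second assignment overwrites the first; for two distinct trials `b ≠ b'` of community `k`
the four-term difference is `f(v_k^{m₁} | S ∪ {v_k^{m₂}}) - f(v_k^{m₁} | S)`, where `S` collects
the other trials. The trials of a community are exchangeable, so each of the `B_k (B_k - 1)`
ordered pairs contributes as much as the pair `(1, 2)`; for `B_k = 1` there is no such pair.
-/

open Function

/-- Resampling coordinate `i` from the weights `w` leaves a sum over all `e` unchanged. -/
theorem sum_eq_sum_mul_sum_update {ι R : Type*} [DecidableEq ι] [Fintype ι] {α : ι → Type*}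
    [∀ i, Fintype (α i)] [CommSemiring R] (H : (∀ i, α i) → R) (i : ι) (w : α i → R)
    (hw : ∑ a, w a = 1) :
    ∑ e, H e = ∑ e, w (e i) * ∑ a, H (update e i a) := by
  have hinv : Involutive fun p : (∀ i, α i) × α i => (update p.1 i p.2, p.1 i) := by
    rintro ⟨e, a⟩
    simp
  calc ∑ e, H e = ∑ p : (∀ i, α i) × α i, w p.2 * H p.1 := by
        simp only [Fintype.sum_prod_type, ← Finset.sum_mul, hw, one_mul]
    _ = ∑ p : (∀ i, α i) × α i, w (p.1 i) * H (update p.1 i p.2) :=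
        (Fintype.sum_equiv hinv.toPerm _ _ fun p => by simp).symm
    _ = _ := by simp only [Fintype.sum_prod_type, Finset.mul_sum]

theorem exists_perm_apply_eq_and_apply_eq {α : Type*} [DecidableEq α] {b b' c c' : α}
    (hb : b ≠ b') (hc : c ≠ c') : ∃ π : Equiv.Perm α, π b = c ∧ π b' = c' := by
  have hb'c : Equiv.swap b c b' ≠ c := fun h =>
    hb ((Equiv.swap b c).injective (h.trans (Equiv.swap_apply_left b c).symm)).symm
  refine ⟨(Equiv.swap b c).trans (Equiv.swap (Equiv.swap b c b') c'), ?_, ?_⟩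
  · simp [Equiv.swap_apply_of_ne_of_ne hb'c.symm hc]
  · simp

section

def expect (n B : Fin K → ℕ) (g : Choice n B → ℝ) (x : Elem n → ℝ) : ℝ :=
  ∑ e, g e * jointProb n B x e

def slotDiff (n B : Fin K → ℕ) (g : Choice n B → ℝ) (s : Slot B) (m : Fin (n s.1))
    (e : Choice n B) : ℝ :=
  g (update e s (some m)) - g (update e s none)

def marg2 (n : Fin K → ℕ) (f : Finset (Elem n) → ℝ) (i j : Elem n) (S : Finset (Elem n)) : ℝ :=
  marg n f i (insert j S) - marg n f i S

/-- The derivative of the affine map `x ↦ prob n x k` in the direction `v`. -/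
def dprob (n : Fin K → ℕ) (v : Elem n → ℝ) (k : Fin K) : Option (Fin (n k)) → ℝ
  | some m => v ⟨k, m⟩
  | none => -∑ m, v ⟨k, m⟩

def permChoice (n B : Fin K → ℕ) (τ : ∀ k, Equiv.Perm (Fin (B k))) : Choice n B ≃ Choice n B where
  toFun e s := e ⟨s.1, τ s.1 s.2⟩
  invFun e s := e ⟨s.1, (τ s.1).symm s.2⟩
  left_inv e := by
    funext ⟨k, b⟩
    show e ⟨k, τ k ((τ k).symm b)⟩ = e ⟨k, b⟩
    rw [Equiv.apply_symm_apply]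
  right_inv e := by
    funext ⟨k, b⟩
    show e ⟨k, (τ k).symm (τ k b)⟩ = e ⟨k, b⟩
    rw [Equiv.symm_apply_apply]

variable {n B : Fin K → ℕ}

theorem sum_prob (x : Elem n → ℝ) (k : Fin K) : ∑ o, prob n x k o = 1 := by
  simp [Fintype.sum_option, prob]

theorem hasDerivAt_prob_update (x : Elem n → ℝ) (i : Elem n) (k : Fin K)
    (o : Option (Fin (n k))) (t : ℝ) :
    HasDerivAt (fun t => prob n (update x i t) k o) (dprob n (Pi.single i 1) k o) t := by
  have hcoord (j : Elem n) := hasDerivAt_pi.mp (hasDerivAt_update x i t) j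
  cases o with
  | some m => exact hcoord ⟨k, m⟩
  | none => exact (HasDerivAt.fun_sum fun m _ => hcoord ⟨k, m⟩).const_sub 1

theorem dprob_single_of_ne {k k' : Fin K} (m : Fin (n k)) (hk : k' ≠ k) (o : Option (Fin (n k'))) :
    dprob n (Pi.single ⟨k, m⟩ 1) k' o = 0 := by
  cases o <;> simp [dprob, hk]

theorem sum_dprob_single_mul {k : Fin K} (m : Fin (n k)) (φ : Option (Fin (n k)) → ℝ) :
    ∑ o, dprob n (Pi.single ⟨k, m⟩ 1) k o * φ o = φ (some m) - φ none := by
  simp only [Fintype.sum_option, dprob, Pi.single_apply, Sigma.mk.injEq, heq_eq_eq, true_and,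
    ite_mul, one_mul, zero_mul, neg_mul, sum_ite_eq', mem_univ, ↓reduceIte]
  ring

theorem expect_sum {ι : Type*} (t : Finset ι) (h : ι → Choice n B → ℝ) (x : Elem n → ℝ) :
    expect n B (fun e => ∑ i ∈ t, h i e) x = ∑ i ∈ t, expect n B (h i) x := by
  simp only [expect, Finset.sum_mul]
  exact Finset.sum_comm

theorem hasDerivAt_jointProb_update (x : Elem n → ℝ) (i : Elem n) (e : Choice n B) :
    HasDerivAt (fun t => jointProb n B (update x i t) e)
      (∑ s, (∏ s' ∈ univ.erase s, prob n x s'.1 (e s')) * dprob n (Pi.single i 1) s.1 (e s))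
      (x i) := by
  simpa [jointProb, update_eq_self] using
    HasDerivAt.fun_finsetProd (u := univ) fun s _ => hasDerivAt_prob_update x i s.1 (e s) (x i)

theorem sum_mul_prod_erase_mul_dprob (g : Choice n B → ℝ) (v x : Elem n → ℝ) (s : Slot B) :
    ∑ e, g e * ((∏ s' ∈ univ.erase s, prob n x s'.1 (e s')) * dprob n v s.1 (e s)) =
      expect n B (fun e => ∑ o, dprob n v s.1 o * g (update e s o)) x := by
  rw [sum_eq_sum_mul_sum_update _ s (prob n x s.1) (sum_prob x s.1)]
  refine Finset.sum_congr rfl fun e _ => ?_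
  have hprod (o : Option (Fin (n s.1))) : ∏ s' ∈ univ.erase s, prob n x s'.1 (update e s o s') =
      ∏ s' ∈ univ.erase s, prob n x s'.1 (e s') :=
    Finset.prod_congr rfl fun s' hs' => by rw [update_of_ne (Finset.ne_of_mem_erase hs')]
  rw [jointProb, ← Finset.mul_prod_erase univ _ (mem_univ s), Finset.mul_sum, Finset.sum_mul]
  refine Finset.sum_congr rfl fun o _ => ?_
  rw [hprod, update_self]
  ring

theorem pderiv_expect (g : Choice n B → ℝ) (k : Fin K) (m : Fin (n k)) (x : Elem n → ℝ) :
    pderiv n (expect n B g) ⟨k, m⟩ x = expect n B (fun e => ∑ b, slotDiff n B g ⟨k, b⟩ m e) x := by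
  have hderiv : HasDerivAt (fun t => expect n B g (update x ⟨k, m⟩ t)) _ _ :=
    HasDerivAt.fun_sum (u := univ) fun e _ =>
    (hasDerivAt_jointProb_update x ⟨k, m⟩ e).const_mul (g e)
  rw [pderiv, hderiv.deriv, expect_sum]
  calc _ = ∑ s : Slot B, ∑ e, g e * ((∏ s' ∈ univ.erase s, prob n x s'.1 (e s')) *
          dprob n (Pi.single ⟨k, m⟩ 1) s.1 (e s)) := by
        simp only [Finset.mul_sum]
        exact Finset.sum_comm
    _ = ∑ s : Slot B, expect n B
          (fun e => ∑ o, dprob n (Pi.single ⟨k, m⟩ 1) s.1 o * g (update e s o)) x := by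
        simp only [sum_mul_prod_erase_mul_dprob]
    _ = _ := by
        rw [Fintype.sum_sigma, Finset.sum_eq_single k]
        · simp only [sum_dprob_single_mul]
          rfl
        · intro k' _ hk
          simp [dprob_single_of_ne m hk, expect]
        · simp

theorem chosen_update (e : Choice n B) (s : Slot B) (o : Option (Fin (n s.1)))
    {A : Finset (Slot B)} (hs : s ∈ A) :
    chosen n B (update e s o) A =
      (o.map fun m => (⟨s.1, m⟩ : Elem n)).toFinset ∪ chosen n B e (A.erase s) := by
  conv_lhs => rw [← Finset.insert_erase hs]
  rw [chosen, Finset.biUnion_insert, update_self]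
  congr 1
  refine Finset.biUnion_congr rfl fun s' hs' => ?_
  rw [update_of_ne (Finset.ne_of_mem_erase hs')]

theorem slotDiff_sum {ι : Type*} (t : Finset ι) (h : ι → Choice n B → ℝ) (s : Slot B)
    (m : Fin (n s.1)) (e : Choice n B) :
    slotDiff n B (fun e => ∑ i ∈ t, h i e) s m e = ∑ i ∈ t, slotDiff n B (h i) s m e := by
  simp only [slotDiff, Finset.sum_sub_distrib]

theorem slotDiff_slotDiff_self (g : Choice n B → ℝ) (s : Slot B) (m₁ m₂ : Fin (n s.1))
    (e : Choice n B) : slotDiff n B (slotDiff n B g s m₂) s m₁ e = 0 := by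
  simp [slotDiff]

theorem slotDiff_slotDiff_chosen (f : Finset (Elem n) → ℝ) {s s' : Slot B} (hs : s ≠ s')
    (m₁ : Fin (n s.1)) (m₂ : Fin (n s'.1)) (e : Choice n B) :
    slotDiff n B (slotDiff n B (fun e => f (chosen n B e univ)) s' m₂) s m₁ e =
      marg2 n f ⟨s.1, m₁⟩ ⟨s'.1, m₂⟩ (chosen n B e ((univ.erase s').erase s)) := by
  have hmem : s ∈ univ.erase s' := Finset.mem_erase.mpr ⟨hs, mem_univ s⟩
  simp only [slotDiff, chosen_update _ _ _ (mem_univ _), chosen_update _ _ _ hmem,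
    Option.map_some, Option.map_none, Option.toFinset_some, Option.toFinset_none,
    Finset.singleton_union, Finset.empty_union, marg2, marg]
  rw [Finset.insert_comm (⟨s'.1, m₂⟩ : Elem n)]
  ring

theorem jointProb_permChoice (τ : ∀ k, Equiv.Perm (Fin (B k))) (x : Elem n → ℝ)
    (e : Choice n B) : jointProb n B x (permChoice n B τ e) = jointProb n B x e :=
  Fintype.prod_equiv (Equiv.sigmaCongrRight τ) _ _ fun _ => rfl

theorem chosen_permChoice (τ : ∀ k, Equiv.Perm (Fin (B k))) (e : Choice n B)
    (A : Finset (Slot B)) :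
    chosen n B (permChoice n B τ e) A = chosen n B e (A.image (Equiv.sigmaCongrRight τ)) := by
  rw [chosen, chosen, Finset.image_biUnion]
  rfl

theorem expect_comp_permChoice (τ : ∀ k, Equiv.Perm (Fin (B k))) (g : Choice n B → ℝ)
    (x : Elem n → ℝ) : expect n B (g ∘ permChoice n B τ) x = expect n B g x :=
  Fintype.sum_equiv (permChoice n B τ) _ _ fun e => by
    rw [comp_apply, jointProb_permChoice]

theorem expect_chosen_erase_erase (Φ : Finset (Elem n) → ℝ) (x : Elem n → ℝ) {k : Fin K}
    {b b' c c' : Fin (B k)} (hb : b ≠ b') (hc : c ≠ c') :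
    expect n B (fun e => Φ (chosen n B e ((univ.erase ⟨k, b⟩).erase ⟨k, b'⟩))) x =
      expect n B (fun e => Φ (chosen n B e ((univ.erase ⟨k, c⟩).erase ⟨k, c'⟩))) x := by
  obtain ⟨π, hπb, hπb'⟩ := exists_perm_apply_eq_and_apply_eq hb hc
  set τ : ∀ k, Equiv.Perm (Fin (B k)) := update (fun _ => 1) k π
  have hσ (a : Fin (B k)) : Equiv.sigmaCongrRight τ ⟨k, a⟩ = ⟨k, π a⟩ := by
    simp [τ]
  have himage : ((univ.erase ⟨k, b⟩).erase ⟨k, b'⟩).image (Equiv.sigmaCongrRight τ) =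
      (univ.erase ⟨k, c⟩).erase ⟨k, c'⟩ := by
    rw [Finset.image_erase (Equiv.injective _), Finset.image_erase (Equiv.injective _),
      Finset.image_univ_equiv, hσ, hσ, hπb, hπb']
  rw [← expect_comp_permChoice τ]
  simp only [comp_def, chosen_permChoice, himage]

theorem pderiv2_ME_eq_sum (f : Finset (Elem n) → ℝ) (k : Fin K) (m₁ m₂ : Fin (n k))
    (x : Elem n → ℝ) :
    pderiv2 n (ME n B f) ⟨k, m₁⟩ ⟨k, m₂⟩ x = ∑ b, ∑ b' ∈ univ.erase b, expect n B
      (fun e => marg2 n f ⟨k, m₁⟩ ⟨k, m₂⟩ (chosen n B e ((univ.erase ⟨k, b'⟩).erase ⟨k, b⟩))) x := by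
  have hME : ME n B f = expect n B (fun e => f (chosen n B e univ)) := rfl
  simp only [← expect_sum]
  rw [pderiv2, hME]
  simp only [pderiv_expect]
  refine congrArg (expect n B · x) (funext fun e => ?_)
  refine Finset.sum_congr rfl fun b _ => ?_
  rw [slotDiff_sum, ← Finset.add_sum_erase _ _ (mem_univ b), slotDiff_slotDiff_self, zero_add]
  refine Finset.sum_congr rfl fun b' hb' =>
    slotDiff_slotDiff_chosen (s := ⟨k, b⟩) (s' := ⟨k, b'⟩) f ?_ m₁ m₂ e
  exact fun h => Finset.ne_of_mem_erase hb' (sigma_mk_injective h).symm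

end

theorem multinoulliExtension_pderiv2_diag {K : ℕ} (n B : Fin K → ℕ)
    (f : Finset (Elem n) → ℝ)
    (x : Elem n → ℝ)
    (k : Fin K) (m₁ m₂ : Fin (n k)) :
    (B k = 1 → pderiv2 n (ME n B f) ⟨k, m₁⟩ ⟨k, m₂⟩ x = 0) ∧
    (∀ _h2 : 2 ≤ B k,
      pderiv2 n (ME n B f) ⟨k, m₁⟩ ⟨k, m₂⟩ x =
        ((B k : ℝ) ^ 2 - (B k : ℝ)) * ∑ e : Choice n B,
          (marg n f ⟨k, m₁⟩
              (insert ⟨k, m₂⟩ (chosen n B e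
                ((Finset.univ.erase (⟨k, ⟨0, by omega⟩⟩ : Slot B)).erase
                  (⟨k, ⟨1, by omega⟩⟩ : Slot B)))) -
            marg n f ⟨k, m₁⟩ (chosen n B e
              ((Finset.univ.erase (⟨k, ⟨0, by omega⟩⟩ : Slot B)).erase
                (⟨k, ⟨1, by omega⟩⟩ : Slot B)))) *
            jointProb n B x e) := by
  refine ⟨fun hB1 => ?_, fun hB2 => ?_⟩
  · have : Subsingleton (Fin (B k)) := by rw [hB1]; infer_instance
    have hempty (b : Fin (B k)) : univ.erase b = ∅ := Finset.eq_empty_of_forall_notMem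
      fun b' hb' => Finset.ne_of_mem_erase hb' (Subsingleton.elim _ _)
    simp only [pderiv2_ME_eq_sum, hempty, Finset.sum_empty, Finset.sum_const_zero]
  · have h01 : (⟨0, by omega⟩ : Fin (B k)) ≠ ⟨1, by omega⟩ := by simp
    rw [pderiv2_ME_eq_sum, Finset.sum_congr rfl fun b _ => Finset.sum_congr rfl fun b' hb' =>
      expect_chosen_erase_erase _ x (Finset.ne_of_mem_erase hb') h01]
    simp only [Finset.sum_const, Finset.card_erase_of_mem (mem_univ _), Finset.card_univ,
      Fintype.card_fin, nsmul_eq_mul, Nat.cast_sub (by omega : 1 ≤ B k)]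
    push_cast
    simp only [expect, marg2]
    ring

end Multinoulli
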